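/- arXiv:2304.10040 — 6 statements merged into one kernel-verified Lean document; each statement's English description precedes it below -/
import Mathlib

section
/- Let φ be a linear operator on a finite-dimensional vector space V. Then for every ℓ ∈ ℕ, dim(ker φ^ℓ) = Σ_{i=0}^{ℓ−1} dim(ker φ ∩ im φ^i). -/
/-!
`φ^n` maps `ker φ^(n+1)` onto `ker φ ⊓ range φ^n`, with kernel `ker φ^n`. Rank–nullity
therefore gives `dim ker φ^(n+1) = dim ker φ^n + dim (ker φ ⊓ range φ^n)`, and the formula
follows by induction.
-/

universe u v

namespace Module.End

variable {R : Type u} {M : Type v}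

section Semiring

variable [Semiring R] [AddCommMonoid M] [Module R M]

theorem map_pow_ker_pow_succ (φ : End R M) (n : ℕ) :
    (LinearMap.ker (φ ^ (n + 1))).map (φ ^ n) = LinearMap.ker φ ⊓ LinearMap.range (φ ^ n) := by
  ext y
  simp only [Submodule.mem_map, LinearMap.mem_ker, Submodule.mem_inf, LinearMap.mem_range,
    pow_succ', mul_apply]
  constructor
  · rintro ⟨x, hx, rfl⟩
    exact ⟨hx, x, rfl⟩
  · rintro ⟨hy, x, rfl⟩
    exact ⟨x, hy, rfl⟩

theorem ker_pow_le_ker_pow_succ (φ : End R M) (n : ℕ) :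
    LinearMap.ker (φ ^ n) ≤ LinearMap.ker (φ ^ (n + 1)) := by
  rw [pow_succ', mul_eq_comp]
  exact LinearMap.ker_le_ker_comp _ _

end Semiring

theorem rank_ker_pow_succ [Ring R] [HasRankNullity.{v} R] [AddCommGroup M] [Module R M]
    (φ : End R M) (n : ℕ) :
    Module.rank R (LinearMap.ker (φ ^ (n + 1))) =
      Module.rank R (LinearMap.ker (φ ^ n)) +
        Module.rank R ↥(LinearMap.ker φ ⊓ LinearMap.range (φ ^ n)) := by
  let f := (φ ^ n).domRestrict (LinearMap.ker (φ ^ (n + 1)))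
  have hrange : LinearMap.range f = LinearMap.ker φ ⊓ LinearMap.range (φ ^ n) := by
    rw [LinearMap.range_domRestrict, map_pow_ker_pow_succ]
  have hker : Module.rank R (LinearMap.ker f) = Module.rank R (LinearMap.ker (φ ^ n)) := by
    rw [LinearMap.ker_domRestrict]
    exact (Submodule.comapSubtypeEquivOfLe (ker_pow_le_ker_pow_succ φ n)).rank_eq
  rw [← f.rank_range_add_rank_ker, hrange, hker, add_comm]

theorem finrank_ker_pow_succ [DivisionRing R] [AddCommGroup M] [Module R M]
    [FiniteDimensional R M] (φ : End R M) (n : ℕ) :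
    finrank R (LinearMap.ker (φ ^ (n + 1))) =
      finrank R (LinearMap.ker (φ ^ n)) +
        finrank R ↥(LinearMap.ker φ ⊓ LinearMap.range (φ ^ n)) := by
  have h := rank_ker_pow_succ φ n
  simp only [← finrank_eq_rank] at h
  exact_mod_cast h

end Module.End

theorem stmt2 (K V : Type) [Field K] [AddCommGroup V] [Module K V] [FiniteDimensional K V]
    (φ : Module.End K V) (ℓ : ℕ) :
    Module.finrank K (LinearMap.ker (φ ^ ℓ)) =
      ∑ i ∈ Finset.range ℓ,
        Module.finrank K ↥(LinearMap.ker φ ⊓ LinearMap.range (φ ^ i)) := by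
  induction ℓ with
  | zero => simp [Module.End.one_eq_id]
  | succ n ih => rw [Finset.sum_range_succ, ← ih, Module.End.finrank_ker_pow_succ]
end

section
/- Let φ be a linear operator on a finite-dimensional vector space V and ℓ ∈ ℕ. If B₀ is a basis of ker φ^ℓ and S ⊆ V is a set such that φ^ℓ maps S bijectively onto a basis of ker φ ∩ im φ^ℓ, then B₀ ∪ S is a basis of ker φ^{ℓ+1}. -/
/-!
Since `φ^ℓ` maps `S` bijectively onto the independent set `T`, the set `S` is independent and
`span S` meets `ker φ^ℓ = span B₀` trivially. Moreover `ker φ^(ℓ+1)` is the preimage under `φ^ℓ`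
of `ker φ ⊓ range φ^ℓ = φ^ℓ (span S)`, which is `span S ⊔ ker φ^ℓ`.
-/

open Submodule

theorem linearIndepOn_and_disjoint_ker_of_bijOn {R M N : Type*} [Ring R] [AddCommGroup M]
    [AddCommGroup N] [Module R M] [Module R N] {f : M →ₗ[R] N} {S : Set M} {T : Set N} (hST : Set.BijOn f S T)
    (hT : LinearIndepOn R id T) :
    LinearIndepOn R id S ∧ Disjoint (span R S) (LinearMap.ker f) := by
  have hfS : LinearIndepOn R f S := by
    rwa [linearIndepOn_iff_image hST.injOn, hST.image_eq]
  refine ⟨hfS.of_comp f, ?_⟩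
  simpa using range_ker_disjoint (v := ((↑) : S → M)) hfS

theorem LinearMap.ker_comp_eq_sup_of_map_eq {R M N P : Type*} [Ring R] [AddCommGroup M]
    [AddCommGroup N] [AddCommGroup P] [Module R M] [Module R N] [Module R P]
    (g : M →ₗ[R] N) (f : N →ₗ[R] P) {W : Submodule R M}
    (hW : W.map g = LinearMap.ker f ⊓ LinearMap.range g) :
    LinearMap.ker (f ∘ₗ g) = W ⊔ LinearMap.ker g := by
  rw [LinearMap.ker_comp, ← comap_map_eq, hW, comap_inf, LinearMap.range_eq_map, comap_map_eq,
    top_sup_eq, inf_top_eq]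

theorem stmt3_general (K V : Type) [Field K] [AddCommGroup V] [Module K V]
    (φ : Module.End K V) (ℓ : ℕ) (B₀ S T : Set V)
    (hB₀li : LinearIndependent K ((↑) : B₀ → V))
    (hB₀span : Submodule.span K B₀ = LinearMap.ker (φ ^ ℓ))
    (hTli : LinearIndependent K ((↑) : T → V))
    (hTspan : Submodule.span K T = LinearMap.ker φ ⊓ LinearMap.range (φ ^ ℓ))
    (hS : Set.BijOn (⇑(φ ^ ℓ)) S T) :
    LinearIndependent K ((↑) : ↥(B₀ ∪ S) → V) ∧
      Submodule.span K (B₀ ∪ S) = LinearMap.ker (φ ^ (ℓ + 1)) := by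
  obtain ⟨hSli, hS_disj⟩ := linearIndepOn_and_disjoint_ker_of_bijOn hS hTli
  refine ⟨LinearIndepOn.id_union hB₀li hSli (hB₀span ▸ hS_disj.symm), ?_⟩
  rw [span_union, hB₀span, sup_comm, pow_succ', Module.End.mul_eq_comp,
    LinearMap.ker_comp_eq_sup_of_map_eq _ _ (by rw [map_span, hS.image_eq, hTspan])]

theorem stmt3 (K V : Type) [Field K] [AddCommGroup V] [Module K V] [FiniteDimensional K V]
    (φ : Module.End K V) (ℓ : ℕ) (B₀ S T : Set V)
    (hB₀li : LinearIndependent K ((↑) : B₀ → V))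
    (hB₀span : Submodule.span K B₀ = LinearMap.ker (φ ^ ℓ))
    (hTli : LinearIndependent K ((↑) : T → V))
    (hTspan : Submodule.span K T = LinearMap.ker φ ⊓ LinearMap.range (φ ^ ℓ))
    (hS : Set.BijOn (⇑(φ ^ ℓ)) S T) :
    LinearIndependent K ((↑) : ↥(B₀ ∪ S) → V) ∧
      Submodule.span K (B₀ ∪ S) = LinearMap.ker (φ ^ (ℓ + 1)) :=
  stmt3_general K V φ ℓ B₀ S T hB₀li hB₀span hTli hTspan hS
end

section
/- For positive integers l, m, n, the determinant of the l×l matrix whose (i,j) entry is the binomial coefficient C(m+n, m+i−j) equals Π_{i=1}^{l} (m+n+i−1)!·(i−1)! / ((m+i−1)!·(n+i−1)!). In particular, this determinant is nonzero. -/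
/-!
Desnanot–Jacobi condensation: deleting the first or last row and the first or last column of
the matrix `(C(m+n, m+i-j))` of size `l` yields matrices of the same family of size `l - 1`,
with `(m, n)` replaced by `(m, n)`, `(m+1, n-1)` or `(m-1, n+1)`. Hence the determinants obey
Dodgson's condensation recurrence in `l`, and so does MacMahon's product, by a telescoping
computation. The base cases are `l ≤ 1` and `m = 0` or `n = 0`, where the matrix is triangular
with unit diagonal. Desnanot–Jacobi is obtained from the Schur complement of the central minor,
which is invertible because, by induction, its determinant is a positive product.
-/

open Finset

namespace Matrix

variable {R : Type*} [CommRing R]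

theorem det_submatrix_mul_det_submatrix_swap {α β : Type*} [Fintype α] [DecidableEq α]
    [Fintype β] [DecidableEq β] (e f : α ≃ β) (X Y : Matrix β β R) :
    (X.submatrix e f).det * (Y.submatrix f e).det = X.det * Y.det := by
  have hX : X.submatrix e f = (X.submatrix e e).submatrix id (f.trans e.symm) := by
    ext; simp
  have hY : Y.submatrix f e = (Y.submatrix e e).submatrix (f.trans e.symm) id := by
    ext; simp
  have hsign : ((Equiv.Perm.sign (f.trans e.symm) : ℤ) : R) ^ 2 = 1 := by
    rw [← Int.cast_pow, ← Units.val_pow_eq_pow_val, Int.units_sq]; simp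
  rw [hX, hY, det_permute', det_permute, det_submatrix_equiv_self, det_submatrix_equiv_self]
  linear_combination X.det * Y.det * hsign

section Sylvester

variable {n : Type*} [Fintype n] [DecidableEq n]

/-- `M.submatrix (borderIndex r) (borderIndex c)` is the block `M.toBlocks₂₂` bordered by the
corner entry `(r, c)` and the corresponding parts of row `r` and column `c`. -/
def borderIndex (r : Fin 2) : Unit ⊕ n → Fin 2 ⊕ n := Sum.elim (fun _ => Sum.inl r) Sum.inr

theorem det_submatrix_borderIndex (M : Matrix (Fin 2 ⊕ n) (Fin 2 ⊕ n) R)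
    [Invertible M.toBlocks₂₂] (r c : Fin 2) :
    (M.submatrix (borderIndex r) (borderIndex c)).det =
      M.toBlocks₂₂.det * (M.toBlocks₁₁ - M.toBlocks₁₂ * ⅟M.toBlocks₂₂ * M.toBlocks₂₁) r c := by
  set N := M.submatrix (borderIndex r) (borderIndex c)
  let : Invertible N.toBlocks₂₂ := ‹Invertible M.toBlocks₂₂›
  rw [← fromBlocks_toBlocks N, det_fromBlocks₂₂, det_unique (_ : Matrix Unit Unit R)]
  rfl

theorem det_toBlocks₂₂_mul_det (M : Matrix (Fin 2 ⊕ n) (Fin 2 ⊕ n) R)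
    (h : IsUnit M.toBlocks₂₂.det) :
    M.toBlocks₂₂.det * M.det =
      (M.submatrix (borderIndex 0) (borderIndex 0)).det *
          (M.submatrix (borderIndex 1) (borderIndex 1)).det -
        (M.submatrix (borderIndex 0) (borderIndex 1)).det *
          (M.submatrix (borderIndex 1) (borderIndex 0)).det := by
  let := M.toBlocks₂₂.invertibleOfIsUnitDet h
  conv_lhs => rw [← fromBlocks_toBlocks M, det_fromBlocks₂₂, det_fin_two]
  simp only [det_submatrix_borderIndex, toBlocks_fromBlocks₂₂]
  ring

end Sylvester

theorem desnanot_jacobi {k : ℕ} (M : Matrix (Fin (k + 2)) (Fin (k + 2)) R)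
    (h : IsUnit (M.submatrix (Fin.succ ∘ Fin.castSucc) (Fin.succ ∘ Fin.castSucc)).det) :
    M.det * (M.submatrix (Fin.succ ∘ Fin.castSucc) (Fin.succ ∘ Fin.castSucc)).det =
      (M.submatrix Fin.succ Fin.succ).det * (M.submatrix Fin.castSucc Fin.castSucc).det -
        (M.submatrix Fin.succ Fin.castSucc).det * (M.submatrix Fin.castSucc Fin.succ).det := by
  -- `e` puts the first and last indices into the corner and the central ones into `toBlocks₂₂`.
  let e : Fin 2 ⊕ Fin k ≃ Fin (k + 2) :=
    Equiv.ofBijective (Sum.elim ![0, Fin.last _] (Fin.succ ∘ Fin.castSucc)) <|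
      (Fintype.bijective_iff_injective_and_card _).mpr
        ⟨Function.Injective.sumElim
          (fun i j hij => by fin_cases i <;> fin_cases j <;> simp_all [Fin.ext_iff])
          ((Fin.succ_injective _).comp (Fin.castSucc_injective _))
          (by simp [Fin.forall_fin_two, Fin.ext_iff]; omega), by simp [add_comm]⟩
  let f₀ : Unit ⊕ Fin k ≃ Fin (k + 1) :=
    Equiv.ofBijective (Sum.elim (fun _ => 0) Fin.succ) <|
      (Fintype.bijective_iff_injective_and_card _).mpr
        ⟨Function.Injective.sumElim (fun _ _ _ => rfl) (Fin.succ_injective _)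
          (fun _ _ => (Fin.succ_ne_zero _).symm), by simp [add_comm]⟩
  let f₁ : Unit ⊕ Fin k ≃ Fin (k + 1) :=
    Equiv.ofBijective (Sum.elim (fun _ => Fin.last k) Fin.castSucc) <|
      (Fintype.bijective_iff_injective_and_card _).mpr
        ⟨Function.Injective.sumElim (fun _ _ _ => rfl) (Fin.castSucc_injective _)
          (fun _ _ => (Fin.castSucc_ne_last _).symm), by simp [add_comm]⟩
  have h₀ : e ∘ borderIndex 0 = Fin.castSucc ∘ f₀ := by
    funext i; rcases i with _ | i <;> simp [e, f₀, borderIndex]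
  have h₁ : e ∘ borderIndex 1 = Fin.succ ∘ f₁ := by
    funext i; rcases i with _ | i <;> simp [e, f₁, borderIndex]
  have := det_toBlocks₂₂_mul_det (M.submatrix e e) h
  simp only [submatrix_submatrix, h₀, h₁] at this
  simp only [← submatrix_submatrix, det_submatrix_equiv_self] at this
  rw [det_submatrix_mul_det_submatrix_swap] at this
  rw [mul_comm]
  exact this.trans (by ring)

end Matrix

def macMahonFactor (m n i : ℕ) : ℚ :=
  ((m + n + i).factorial * i.factorial : ℚ) / ((m + i).factorial * (n + i).factorial)

def macMahon (l m n : ℕ) : ℚ := ∏ i ∈ range l, macMahonFactor m n i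

theorem macMahonFactor_pos (m n i : ℕ) : 0 < macMahonFactor m n i := by
  unfold macMahonFactor; positivity

theorem macMahon_pos (l m n : ℕ) : 0 < macMahon l m n :=
  prod_pos fun i _ => macMahonFactor_pos m n i

theorem macMahon_zero_left (l n : ℕ) : macMahon l 0 n = 1 :=
  prod_eq_one fun i _ => by
    rw [macMahonFactor, zero_add, zero_add, mul_comm, div_self (by positivity)]

theorem macMahon_zero_right (l m : ℕ) : macMahon l m 0 = 1 :=
  prod_eq_one fun i _ => by
    rw [macMahonFactor, add_zero, zero_add, div_self (by positivity)]

theorem macMahonFactor_succ_mul (m n k : ℕ) :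
    macMahonFactor m n (k + 1) * ((m + k + 1) * (n + k + 1)) =
      macMahonFactor m n k * ((k + 1) * (m + n + k + 1)) := by
  simp only [macMahonFactor, ← add_assoc, Nat.factorial_succ]
  push_cast
  field_simp

theorem macMahonFactor_succ_left_mul (m n i : ℕ) :
    macMahonFactor (m + 1) n i * (m + 1 + i) = macMahonFactor m (n + 1) i * (n + 1 + i) := by
  rw [macMahonFactor, macMahonFactor, show m + 1 + n = m + (n + 1) by ring,
    show m + 1 + i = m + i + 1 by ring, show n + 1 + i = n + i + 1 by ring, Nat.factorial_succ,
    Nat.factorial_succ]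
  push_cast
  field_simp
  ring

theorem macMahon_succ_left_mul (l m n : ℕ) :
    macMahon l (m + 1) n * (m + 1).ascFactorial l =
      macMahon l m (n + 1) * (n + 1).ascFactorial l := by
  simp only [macMahon, Nat.ascFactorial_eq_prod_range, Nat.cast_prod, ← prod_mul_distrib]
  push_cast
  exact prod_congr rfl fun i _ => macMahonFactor_succ_left_mul m n i

theorem macMahon_condensation (k m n : ℕ) :
    macMahon (k + 2) (m + 1) (n + 1) * macMahon k (m + 1) (n + 1) =
      macMahon (k + 1) (m + 1) (n + 1) * macMahon (k + 1) (m + 1) (n + 1) -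
        macMahon (k + 1) (m + 2) n * macMahon (k + 1) m (n + 2) := by
  set X := macMahon (k + 1) (m + 1) (n + 1)
  set A := macMahon (k + 1) (m + 2) n
  set B := macMahon (k + 1) m (n + 2)
  set a₁ : ℚ := (((m + 1).ascFactorial (k + 1) : ℕ) : ℚ)
  set a₂ : ℚ := (((m + 2).ascFactorial (k + 1) : ℕ) : ℚ)
  set b₁ : ℚ := (((n + 1).ascFactorial (k + 1) : ℕ) : ℚ)
  set b₂ : ℚ := (((n + 2).ascFactorial (k + 1) : ℕ) : ℚ)
  have hA : A * a₂ = X * b₁ := macMahon_succ_left_mul (k + 1) (m + 1) n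
  have hB : X * a₁ = B * b₂ := macMahon_succ_left_mul (k + 1) m (n + 1)
  have ha : (m + 1) * a₂ = (m + k + 2) * a₁ := by
    simp only [a₁, a₂]; exact_mod_cast (Nat.succ_ascFactorial (m + 1) (k + 1)).trans (by ring_nf)
  have hb : (n + 1) * b₂ = (n + k + 2) * b₁ := by
    simp only [b₁, b₂]; exact_mod_cast (Nat.succ_ascFactorial (n + 1) (k + 1)).trans (by ring_nf)
  -- the two shift ratios `b₁ / a₂` and `a₁ / b₂` multiply to `(m+1)(n+1) / ((m+k+2)(n+k+2))`
  have hAB : A * B * ((m + k + 2) * (n + k + 2)) = (m + 1) * (n + 1) * X ^ 2 := by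
    have : a₁ * b₁ ≠ 0 := by positivity
    apply mul_right_cancel₀ this
    linear_combination (m + 1) * (n + 1) * X * a₁ * hA - (m + 1) * (n + 1) * A * a₂ * hB
      - A * B * (m + 1) * a₂ * hb - A * B * (n + k + 2) * b₁ * ha
  have hX : macMahon (k + 2) (m + 1) (n + 1) = X * macMahonFactor (m + 1) (n + 1) (k + 1) :=
    prod_range_succ _ _
  have hY : X = macMahon k (m + 1) (n + 1) * macMahonFactor (m + 1) (n + 1) k := prod_range_succ _ _
  have ht := macMahonFactor_succ_mul (m + 1) (n + 1) k
  push_cast at ht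
  have : ((m : ℚ) + k + 2) * (n + k + 2) ≠ 0 := by positivity
  rw [hX]
  apply mul_right_cancel₀ this
  linear_combination X * macMahon k (m + 1) (n + 1) * ht + hAB
    - X * ((k + 1) * (m + n + k + 3)) * hY

def binomialToeplitz (l m n : ℕ) : Matrix (Fin l) (Fin l) ℚ :=
  Matrix.of fun i j => if (j : ℕ) ≤ m + i then ((m + n).choose (m + i - j) : ℚ) else 0

theorem binomialToeplitz_submatrix {k l m n m' n' : ℕ} (f g : Fin k → Fin l)
    (hmn : m' + n' = m + n) (hfg : ∀ i j, m + (f i : ℕ) + j = m' + i + (g j : ℕ)) :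
    (binomialToeplitz l m n).submatrix f g = binomialToeplitz k m' n' := by
  ext i j
  have := hfg i j
  simp only [binomialToeplitz, Matrix.submatrix_apply, Matrix.of_apply, hmn]
  split_ifs <;> first | rfl | omega | congr 2; omega

theorem det_binomialToeplitz_zero_left (l n : ℕ) : (binomialToeplitz l 0 n).det = 1 := by
  rw [Matrix.det_of_isLowerTriangular]
  · exact prod_eq_one fun i _ => by simp [binomialToeplitz]
  · intro i j hij
    simp only [binomialToeplitz, Matrix.of_apply]
    rw [if_neg (by simpa using hij)]

theorem det_binomialToeplitz_zero_right (l m : ℕ) : (binomialToeplitz l m 0).det = 1 := by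
  rw [Matrix.det_of_isUpperTriangular]
  · exact prod_eq_one fun i _ => by simp [binomialToeplitz]
  · intro i j hij
    have : (j : ℕ) < i := hij
    simp only [binomialToeplitz, Matrix.of_apply, add_zero]
    split_ifs
    · rw [Nat.choose_eq_zero_of_lt (by omega), Nat.cast_zero]
    · rfl

theorem det_binomialToeplitz_one (m n : ℕ) : (binomialToeplitz 1 m n).det = macMahon 1 m n := by
  rw [Matrix.det_fin_one, macMahon, prod_range_one, macMahonFactor]
  simp [binomialToeplitz, Nat.cast_choose ℚ (Nat.le_add_right m n)]

theorem det_binomialToeplitz (l m n : ℕ) : (binomialToeplitz l m n).det = macMahon l m n := by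
  induction l using Nat.twoStepInduction generalizing m n with
  | zero => simp [macMahon]
  | one => exact det_binomialToeplitz_one m n
  | more k ih₀ ih₁ =>
    rcases m with _ | m
    · rw [det_binomialToeplitz_zero_left, macMahon_zero_left]
    rcases n with _ | n
    · rw [det_binomialToeplitz_zero_right, macMahon_zero_right]
    set M := binomialToeplitz (k + 2) (m + 1) (n + 1)
    have hinner : M.submatrix (Fin.succ ∘ Fin.castSucc) (Fin.succ ∘ Fin.castSucc) =
        binomialToeplitz k (m + 1) (n + 1) :=
      binomialToeplitz_submatrix _ _ rfl fun _ _ => by grind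
    have hsucc : M.submatrix Fin.succ Fin.succ = binomialToeplitz (k + 1) (m + 1) (n + 1) :=
      binomialToeplitz_submatrix _ _ rfl fun _ _ => by grind
    have hcastSucc : M.submatrix Fin.castSucc Fin.castSucc =
        binomialToeplitz (k + 1) (m + 1) (n + 1) :=
      binomialToeplitz_submatrix _ _ rfl fun _ _ => by grind
    have hlower : M.submatrix Fin.succ Fin.castSucc = binomialToeplitz (k + 1) (m + 2) n :=
      binomialToeplitz_submatrix _ _ (by omega) fun _ _ => by grind
    have hupper : M.submatrix Fin.castSucc Fin.succ = binomialToeplitz (k + 1) m (n + 2) :=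
      binomialToeplitz_submatrix _ _ (by omega) fun _ _ => by grind
    have hD : macMahon k (m + 1) (n + 1) ≠ 0 := (macMahon_pos _ _ _).ne'
    have := M.desnanot_jacobi (by rw [hinner, ih₀]; exact hD.isUnit)
    rw [hinner, hsucc, hcastSucc, hlower, hupper, ih₀, ih₁, ih₁, ih₁,
      ← macMahon_condensation] at this
    exact mul_right_cancel₀ hD this

theorem stmt6_general (l m n : ℕ) :
    Matrix.det (Matrix.of fun i j : Fin l =>
        if (j : ℕ) ≤ m + (i : ℕ) then ((m + n).choose (m + (i : ℕ) - (j : ℕ)) : ℚ) else 0) =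
      ∏ i ∈ Finset.range l,
        ((m + n + i).factorial * i.factorial : ℚ) /
          ((m + i).factorial * (n + i).factorial) ∧
    Matrix.det (Matrix.of fun i j : Fin l =>
        if (j : ℕ) ≤ m + (i : ℕ) then ((m + n).choose (m + (i : ℕ) - (j : ℕ)) : ℚ) else 0) ≠ 0 :=
  have h : (binomialToeplitz l m n).det = macMahon l m n := det_binomialToeplitz l m n
  ⟨h, h ▸ (macMahon_pos l m n).ne'⟩

theorem stmt6 (l m n : ℕ) (hl : 0 < l) (hm : 0 < m) (hn : 0 < n) :
    Matrix.det (Matrix.of fun i j : Fin l =>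
        if (j : ℕ) ≤ m + (i : ℕ) then ((m + n).choose (m + (i : ℕ) - (j : ℕ)) : ℚ) else 0) =
      ∏ i ∈ Finset.range l,
        ((m + n + i).factorial * i.factorial : ℚ) /
          ((m + i).factorial * (n + i).factorial) ∧
    Matrix.det (Matrix.of fun i j : Fin l =>
        if (j : ℕ) ≤ m + (i : ℕ) then ((m + n).choose (m + (i : ℕ) - (j : ℕ)) : ℚ) else 0) ≠ 0 :=
  stmt6_general l m n
end

section
/- Fix positive integers k, m = k−r+1, n = r−1, l. The system of linear equations Σ_{j=0}^{l} (−1)^{m+i−j} C(m+n, m+i−j) x_j = 1 for i = 0, 1, …, l has a unique solution (x₀,…,x_l) in ℂ, because the coefficient matrix ((−1)^{m+i−j} C(m+n, m+i−j))_{0≤i,j≤l} is invertible. -/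
/-!
If `A v = 0` for `A = coefMat m n l`, the polynomial `p = (1 - X)^(m+n) * (v₀ + v₁ X + ⋯ + v_l X^l)`
has zero coefficients in degrees `m, …, m + l`, because these coefficients are the entries of
`A v`. Since `deg p ≤ m + n + l`, it therefore has at most `m + n` nonzero coefficients, while it is
divisible by `(X - 1)^(m+n)`. But a nonzero polynomial with at most `N` terms cannot vanish to
order `N` at a nonzero point: `X d/dX - s` removes the term of degree `s` and lowers the order of
vanishing by one, so induction on `N` leaves a monomial with a nonzero root. Hence `p = 0`, so
`v = 0` and `A` is invertible.
-/

/-- The `(l+1) × (l+1)` coefficient matrix with `(i,j)` entry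
`(-1)^(m+i-j) C(m+n, m+i-j)` (indices `0 ≤ i, j ≤ l`), the binomial coefficient
being `0` when `m + i - j < 0`. -/
noncomputable def coefMat (m n l : ℕ) : Matrix (Fin (l + 1)) (Fin (l + 1)) ℂ :=
  Matrix.of fun i j : Fin (l + 1) =>
    if (j : ℕ) ≤ m + (i : ℕ) then
      (-1 : ℂ) ^ (m + (i : ℕ) - (j : ℕ)) * ((m + n).choose (m + (i : ℕ) - (j : ℕ)) : ℂ)
    else 0

open Polynomial Finset Matrix

namespace Polynomial

lemma coeff_X_mul_derivative_sub_C_mul {R : Type*} [CommRing R] (p : R[X]) (s e : ℕ) :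
    (X * derivative p - C (s : R) * p).coeff e = ((e : R) - s) * p.coeff e := by
  rcases e with _ | e
  · simp
  · simp only [map_natCast, coeff_sub, coeff_X_mul, coeff_derivative, coeff_natCast_mul,
      Nat.cast_add, Nat.cast_one]
    ring

lemma support_X_mul_derivative_sub_C_mul {R : Type*} [CommRing R] [NoZeroDivisors R]
    [CharZero R] (p : R[X]) (s : ℕ) :
    (X * derivative p - C (s : R) * p).support = p.support.erase s := by
  ext e
  rw [mem_support_iff, coeff_X_mul_derivative_sub_C_mul, mem_erase, mem_support_iff,
    mul_ne_zero_iff, sub_ne_zero, Ne, Nat.cast_inj]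

lemma pow_dvd_X_mul_derivative_sub_C_mul {R : Type*} [CommRing R] {p q : R[X]} {N : ℕ}
    (s : ℕ) (h : q ^ (N + 1) ∣ p) : q ^ N ∣ X * derivative p - C (s : R) * p :=
  ((pow_sub_one_dvd_derivative_of_pow_dvd h).mul_left X).sub
    (((pow_dvd_pow q N.le_succ).trans h).mul_left _)

theorem eq_zero_of_card_support_le_of_pow_dvd {R : Type*} [CommRing R] [NoZeroDivisors R]
    [CharZero R] {a : R} (ha : a ≠ 0) {N : ℕ} {p : R[X]} (hcard : #p.support ≤ N)
    (hdvd : (X - C a) ^ N ∣ p) : p = 0 := by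
  induction N generalizing p with
  | zero => simpa using hcard
  | succ N ih =>
    obtain hp | ⟨s, hs⟩ := p.support.eq_empty_or_nonempty
    · exact support_eq_empty.mp hp
    have hq : X * derivative p - C (s : R) * p = 0 := by
      refine ih ?_ (pow_dvd_X_mul_derivative_sub_C_mul s hdvd)
      rw [support_X_mul_derivative_sub_C_mul, card_erase_of_mem hs]
      omega
    obtain ⟨t, c, rfl⟩ : ∃ t c, p = monomial t c := by
      rw [← card_support_le_one_iff_monomial, ← Nat.sub_eq_zero_iff_le, ← card_erase_of_mem hs,
        ← support_X_mul_derivative_sub_C_mul, hq, support_zero, card_empty]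
    have hroot : (monomial t c).eval a = 0 :=
      dvd_iff_isRoot.mp ((dvd_pow_self _ N.succ_ne_zero).trans hdvd)
    rw [eval_monomial, mul_eq_zero] at hroot
    rw [hroot.resolve_right (pow_ne_zero t ha), monomial_zero_right]

lemma card_support_le_of_coeff_eq_zero {R : Type*} [Semiring R] {p : R[X]} {a b d : ℕ}
    (hdeg : p.natDegree < d) (hbd : b ≤ d) (hzero : ∀ e ∈ Ico a b, p.coeff e = 0) :
    #p.support ≤ d - (b - a) := by
  have hsub : p.support ⊆ range d \ Ico a b := fun e he => by
    rw [mem_support_iff] at he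
    exact mem_sdiff.mpr ⟨mem_range.mpr ((le_natDegree_of_ne_zero he).trans_lt hdeg),
      fun h => he (hzero e h)⟩
  calc #p.support ≤ #(range d \ Ico a b) := card_le_card hsub
    _ = d - (b - a) := by
      rw [card_sdiff_of_subset (fun e he => mem_range.mpr ((mem_Ico.mp he).2.trans_le hbd)),
        card_range, Nat.card_Ico]

lemma coeff_one_sub_X_pow {R : Type*} [CommRing R] (n k : ℕ) :
    ((1 - X : R[X]) ^ n).coeff k = (-1) ^ k * n.choose k := by
  rw [sub_eq_neg_add, (Commute.all _ _).add_pow, finsetSum_coeff]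
  simp_rw [one_pow, mul_one, neg_pow (X : R[X]), ← C_1, ← C_neg, ← C_pow, coeff_mul_natCast,
    coeff_C_mul_X_pow, ite_mul, zero_mul, sum_ite_eq, mem_range, Nat.lt_succ_iff]
  split_ifs with h
  · rfl
  · rw [Nat.choose_eq_zero_of_lt (not_le.mp h), Nat.cast_zero, mul_zero]

end Polynomial

lemma coeff_one_sub_X_pow_mul_ofFn (m n l : ℕ) (v : Fin (l + 1) → ℂ) (i : Fin (l + 1)) :
    ((1 - X) ^ (m + n) * ofFn (l + 1) v).coeff (m + i) = (coefMat m n l *ᵥ v) i := by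
  rw [ofFn_eq_sum_monomial, mul_sum, finsetSum_coeff, mulVec, dotProduct]
  refine sum_congr rfl fun j _ => ?_
  rw [← C_mul_X_pow_eq_monomial, mul_left_comm, coeff_C_mul, coeff_mul_X_pow',
    coeff_one_sub_X_pow]
  simp only [coefMat, Matrix.of_apply]
  split_ifs <;> ring

lemma isUnit_coefMat (m n l : ℕ) : IsUnit (coefMat m n l) := by
  refine mulVec_injective_iff_isUnit.mp <|
    (injective_iff_map_eq_zero (mulVecLin (coefMat m n l))).mpr fun v hv => ?_
  set p := (1 - X : ℂ[X]) ^ (m + n) * ofFn (l + 1) v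
  have hwindow : ∀ e ∈ Ico m (m + l + 1), p.coeff e = 0 := by
    intro e he
    obtain ⟨i, rfl⟩ : ∃ i : Fin (l + 1), e = m + i := ⟨⟨e - m, by grind⟩, by grind⟩
    rw [coeff_one_sub_X_pow_mul_ofFn, ← mulVecLin_apply, hv, Pi.zero_apply]
  have hdeg : p.natDegree < m + n + l + 1 := by
    have h₁ : ((1 - X : ℂ[X]) ^ (m + n)).natDegree ≤ m + n := by compute_degree
    have h₂ := ofFn_natDegree_lt (le_add_self : 1 ≤ l + 1) v
    calc p.natDegree ≤ ((1 - X : ℂ[X]) ^ (m + n)).natDegree + (ofFn (l + 1) v).natDegree :=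
          natDegree_mul_le
      _ < m + n + l + 1 := by omega
  have hcard : #p.support ≤ m + n :=
    (card_support_le_of_coeff_eq_zero hdeg (by omega) hwindow).trans (by omega)
  have hdvd : (X - C 1) ^ (m + n) ∣ p :=
    (pow_dvd_pow_of_dvd ((dvd_neg.mpr dvd_rfl).trans (by rw [C_1, neg_sub])) _).mul_right _
  have hp : p = 0 := eq_zero_of_card_support_le_of_pow_dvd one_ne_zero hcard hdvd
  have h1X : (1 - X : ℂ[X]) ≠ 0 := by
    rw [← neg_sub, neg_ne_zero, ← C_1]
    exact X_sub_C_ne_zero 1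
  have hv0 : ofFn (l + 1) v = 0 := (mul_eq_zero.mp hp).resolve_left (pow_ne_zero _ h1X)
  exact injective_ofFn _ (hv0.trans (map_zero _).symm)

theorem stmt9_general (k r l : ℕ) :
    IsUnit (coefMat (k - r + 1) (r - 1) l) ∧
    ∃! x : Fin (l + 1) → ℂ, ∀ i : Fin (l + 1),
      ∑ j : Fin (l + 1), coefMat (k - r + 1) (r - 1) l i j * x j = 1 := by
  have hA := isUnit_coefMat (k - r + 1) (r - 1) l
  have hbij : Function.Bijective (coefMat (k - r + 1) (r - 1) l).mulVec :=
    ⟨mulVec_injective_of_isUnit hA, mulVec_surjective_iff_isUnit.mpr hA⟩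
  refine ⟨hA, ?_⟩
  simpa only [funext_iff, mulVec, dotProduct] using hbij.existsUnique fun _ => 1

theorem stmt9 (k r l : ℕ) (hr : 1 ≤ r) (hrk : r ≤ k) :
    IsUnit (coefMat (k - r + 1) (r - 1) l) ∧
    ∃! x : Fin (l + 1) → ℂ, ∀ i : Fin (l + 1),
      ∑ j : Fin (l + 1), coefMat (k - r + 1) (r - 1) l i j * x j = 1 :=
  stmt9_general k r l
end

section
/- Let A ∈ M_{m×m}(ℂ) and B ∈ M_{n×n}(ℂ) with distinct eigenvalues λ₁,…,λ_a and μ₁,…,μ_b respectively. Then the set of eigenvalues of the operator φ_{AB}(X) = AX − XB on M_{m×n}(ℂ) is exactly {λ_i − μ_j : 1 ≤ i ≤ a, 1 ≤ j ≤ b}. -/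
/-!
If `A Y - Y B = z Y` with `Y ≠ 0`, then `Y` intertwines `A - z` and `B`, hence
`p(A - z) Y = Y p(B)` for every polynomial `p`. For `p = χ_B`, Cayley–Hamilton makes
`χ_B(A - z)` singular, and by spectral mapping `A - z` and `B` share an eigenvalue.
Conversely, if `A v = λ v` and `wᵀ B = μ wᵀ`, the rank-one matrix `v wᵀ` is an eigenvector of
`X ↦ A X - X B` for `λ - μ`.
-/

/-- The Sylvester operator `X ↦ A X - X B`. -/
noncomputable def sylvOp {I J : Type} [Fintype I] [Fintype J]
    (A : Matrix I I ℂ) (B : Matrix J J ℂ) :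
    Module.End ℂ (Matrix I J ℂ) where
  toFun X := A * X - X * B
  map_add' X Y := by
    simp only [Matrix.mul_add, Matrix.add_mul]
    abel
  map_smul' c X := by
    simp only [Matrix.mul_smul, Matrix.smul_mul, smul_sub, RingHom.id_apply]

open Polynomial Pointwise

namespace Matrix

variable {I J K : Type*} [Fintype I] [Fintype J] [DecidableEq I] [DecidableEq J]

theorem aeval_mul_eq_mul_aeval_of_mul_eq_mul {R : Type*} [CommSemiring R]
    {A : Matrix I I R} {B : Matrix J J R} {Y : Matrix I J R} (hY : A * Y = Y * B) (p : R[X]) :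
    aeval A p * Y = Y * aeval B p := by
  induction p using Polynomial.induction_on' with
  | add p q hp hq => simp only [map_add, Matrix.add_mul, Matrix.mul_add, hp, hq]
  | monomial k c =>
    have hpow : A ^ k * Y = Y * B ^ k := by
      induction k with
      | zero => simp
      | succ k ih =>
        rw [pow_succ, Matrix.mul_assoc, hY, ← Matrix.mul_assoc, ih, Matrix.mul_assoc, ← pow_succ]
    simp only [aeval_monomial, Algebra.algebraMap_eq_smul_one, Matrix.smul_mul, Matrix.mul_smul,
      Matrix.one_mul, hpow]

variable [Field K]

theorem exists_mulVec_eq_smul_of_mem_spectrum {A : Matrix I I K} {μ : K}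
    (hμ : μ ∈ spectrum K A) : ∃ v ≠ 0, A *ᵥ v = μ • v := by
  rw [spectrum.mem_iff, isUnit_iff_isUnit_det, isUnit_iff_ne_zero, not_not,
    ← exists_mulVec_eq_zero_iff] at hμ
  obtain ⟨v, hv, hμv⟩ := hμ
  refine ⟨v, hv, ?_⟩
  rw [sub_mulVec, Algebra.algebraMap_eq_smul_one, smul_mulVec, one_mulVec, sub_eq_zero] at hμv
  exact hμv.symm

theorem exists_vecMul_eq_smul_of_mem_spectrum {B : Matrix J J K} {μ : K}
    (hμ : μ ∈ spectrum K B) : ∃ w ≠ 0, w ᵥ* B = μ • w := by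
  rw [spectrum.mem_iff, isUnit_iff_isUnit_det, isUnit_iff_ne_zero, not_not,
    ← exists_vecMul_eq_zero_iff] at hμ
  obtain ⟨w, hw, hμw⟩ := hμ
  refine ⟨w, hw, ?_⟩
  rw [vecMul_sub, Algebra.algebraMap_eq_smul_one, vecMul_smul, vecMul_one, sub_eq_zero] at hμw
  exact hμw.symm

theorem eq_zero_of_mul_eq_mul_of_disjoint_spectrum [IsAlgClosed K]
    {A : Matrix I I K} {B : Matrix J J K} {Y : Matrix I J K}
    (hAB : Disjoint (spectrum K A) (spectrum K B)) (hY : A * Y = Y * B) : Y = 0 := by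
  have hunit : IsUnit (aeval A B.charpoly) := by
    nontriviality Matrix I I K
    rw [← spectrum.zero_notMem_iff K, spectrum.map_polynomial_aeval_of_nonempty _ _
      (spectrum.nonempty_of_isAlgClosed_of_finiteDimensional K A)]
    rintro ⟨t, htA, ht⟩
    exact hAB.notMem_of_mem_left htA (mem_spectrum_iff_isRoot_charpoly.mpr ht)
  have hzero : aeval A B.charpoly * Y = 0 := by
    rw [aeval_mul_eq_mul_aeval_of_mul_eq_mul hY, aeval_self_charpoly, Matrix.mul_zero]
  have := hunit.invertible
  rw [← inv_mul_cancel_left_of_invertible (A := aeval A B.charpoly) Y, hzero, Matrix.mul_zero]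

end Matrix

section Sylvester

open Matrix

variable {I J : Type} [Fintype I] [Fintype J] {A : Matrix I I ℂ} {B : Matrix J J ℂ}

theorem sylvOp_apply (X : Matrix I J ℂ) : sylvOp A B X = A * X - X * B := rfl

theorem sylvOp_vecMulVec {μ ν : ℂ} {v : I → ℂ} {w : J → ℂ} (hv : A *ᵥ v = μ • v)
    (hw : w ᵥ* B = ν • w) :
    sylvOp A B (vecMulVec v w) = (μ - ν) • vecMulVec v w := by
  rw [sylvOp_apply, mul_vecMulVec, vecMulVec_mul, hv, hw, smul_vecMulVec,
    vecMulVec_smul, sub_smul]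

variable [DecidableEq I] [DecidableEq J]

theorem sub_mem_spectrum_sylvOp {μ ν : ℂ} (hμ : μ ∈ spectrum ℂ A) (hν : ν ∈ spectrum ℂ B) :
    μ - ν ∈ spectrum ℂ (sylvOp A B) := by
  obtain ⟨v, hv0, hv⟩ := exists_mulVec_eq_smul_of_mem_spectrum hμ
  obtain ⟨w, hw0, hw⟩ := exists_vecMul_eq_smul_of_mem_spectrum hν
  have hvw : vecMulVec v w ≠ 0 := by
    obtain ⟨i, hi⟩ := Function.ne_iff.mp hv0
    obtain ⟨j, hj⟩ := Function.ne_iff.mp hw0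
    exact fun h ↦ mul_ne_zero hi hj congr($h i j)
  exact Module.End.HasEigenvalue.mem_spectrum <| Module.End.hasEigenvalue_of_hasEigenvector
    ⟨Module.End.mem_eigenspace_iff.mpr (sylvOp_vecMulVec hv hw), hvw⟩

theorem spectrum_sylvOp_subset : spectrum ℂ (sylvOp A B) ⊆ spectrum ℂ A - spectrum ℂ B := by
  intro z hz
  obtain ⟨Y, hY⟩ := (Module.End.hasEigenvalue_iff_mem_spectrum.mpr hz).exists_hasEigenvector
  have hshift : (A - algebraMap ℂ _ z) * Y = Y * B := by
    rw [Matrix.sub_mul, Algebra.algebraMap_eq_smul_one, smul_mul, Matrix.one_mul,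
      sub_eq_iff_eq_add', ← sub_eq_iff_eq_add, ← sylvOp_apply, hY.apply_eq_smul]
  obtain ⟨t, htA, htB⟩ := Set.not_disjoint_iff.mp
    fun h ↦ hY.2 (eq_zero_of_mul_eq_mul_of_disjoint_spectrum h hshift)
  rw [← spectrum.sub_singleton_eq, Set.sub_singleton] at htA
  obtain ⟨s, hs, rfl⟩ := htA
  exact ⟨s, hs, s - z, htB, sub_sub_cancel s z⟩

theorem spectrum_sylvOp : spectrum ℂ (sylvOp A B) = spectrum ℂ A - spectrum ℂ B :=
  spectrum_sylvOp_subset.antisymm <| Set.sub_subset_iff.mpr fun _ hμ _ hν ↦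
    sub_mem_spectrum_sylvOp hμ hν

end Sylvester

theorem stmt12_general (m n a b : ℕ)
    (A : Matrix (Fin m) (Fin m) ℂ) (B : Matrix (Fin n) (Fin n) ℂ)
    (lam : Fin a → ℂ) (mu : Fin b → ℂ)
    (hlspec : spectrum ℂ A = Set.range lam)
    (hmspec : spectrum ℂ B = Set.range mu) :
    spectrum ℂ (sylvOp A B) = {z : ℂ | ∃ i j, z = lam i - mu j} := by
  rw [spectrum_sylvOp, hlspec, hmspec]
  ext z
  simp [Set.mem_sub, eq_comm]

theorem stmt12 (m n a b : ℕ)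
    (A : Matrix (Fin m) (Fin m) ℂ) (B : Matrix (Fin n) (Fin n) ℂ)
    (lam : Fin a → ℂ) (mu : Fin b → ℂ)
    (hlinj : Function.Injective lam) (hlspec : spectrum ℂ A = Set.range lam)
    (hminj : Function.Injective mu) (hmspec : spectrum ℂ B = Set.range mu) :
    spectrum ℂ (sylvOp A B) = {z : ℂ | ∃ i j, z = lam i - mu j} :=
  stmt12_general m n a b A B lam mu hlspec hmspec
end

section
/- Let N_m be the m×m nilpotent single Jordan block, and let ad N_m be the nilpotent operator on M_{m×m}(ℂ) defined by ad N_m(X) = N_m X − X N_m. Then dim ker (ad N_m)^k equals k·m − ⌊k²/4⌋ when k ≤ m, m² − ⌊(2m−k)²/4⌋ when m ≤ k ≤ 2m−1, and m² for k ≥ 2m−1. -/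
/-- The `m × m` nilpotent single Jordan block `N_m = e₁₂ + e₂₃ + ⋯ + e_{m-1,m}`. -/
def jordanN (m : ℕ) : Matrix (Fin m) (Fin m) ℂ :=
  fun a b => if (b : ℕ) = (a : ℕ) + 1 then 1 else 0

namespace Stmt17Aux

open Finset Module

lemma sylvOp_apply {I J : Type} [Fintype I] [Fintype J]
    (A : Matrix I I ℂ) (B : Matrix J J ℂ) (X : Matrix I J ℂ) :
    sylvOp A B X = A * X - X * B := rfl

variable {m : ℕ}

/-- lowering matrix of the sl2 triple -/
noncomputable def lowM (m : ℕ) : Matrix (Fin m) (Fin m) ℂ :=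
  fun a b => if (a : ℕ) = (b : ℕ) + 1 then ((a : ℕ) : ℂ) * ((m : ℂ) - ((a : ℕ) : ℂ)) else 0

/-- Cartan matrix of the sl2 triple -/
noncomputable def hMat (m : ℕ) : Matrix (Fin m) (Fin m) ℂ :=
  fun a b => if a = b then ((m : ℂ) - 1 - 2 * ((a : ℕ) : ℂ)) else 0

lemma jordanN_mul_apply (X : Matrix (Fin m) (Fin m) ℂ) (a b : Fin m) :
    (jordanN m * X) a b = if h : (a : ℕ) + 1 < m then X ⟨(a : ℕ) + 1, h⟩ b else 0 := by
  rw [Matrix.mul_apply]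
  split_ifs with h
  · rw [Finset.sum_eq_single (⟨(a : ℕ) + 1, h⟩ : Fin m)]
    · simp [jordanN]
    · intro c _ hc
      simp only [jordanN]
      rw [if_neg, zero_mul]
      intro hcc
      exact hc (Fin.ext hcc)
    · intro habs; exact absurd (Finset.mem_univ _) habs
  · apply Finset.sum_eq_zero
    intro c _
    simp only [jordanN]
    rw [if_neg, zero_mul]
    intro hcc; exact h (hcc ▸ c.isLt)

lemma mul_jordanN_apply (X : Matrix (Fin m) (Fin m) ℂ) (a b : Fin m) :
    (X * jordanN m) a b =
      if 1 ≤ (b : ℕ) then X a ⟨(b : ℕ) - 1, lt_of_le_of_lt (Nat.sub_le _ _) b.isLt⟩ else 0 := by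
  rw [Matrix.mul_apply]
  split_ifs with h
  · rw [Finset.sum_eq_single (⟨(b : ℕ) - 1, lt_of_le_of_lt (Nat.sub_le _ _) b.isLt⟩ : Fin m)]
    · simp only [jordanN]
      rw [if_pos (by omega), mul_one]
    · intro c _ hc
      simp only [jordanN]
      rw [if_neg, mul_zero]
      intro hcc
      refine hc (Fin.ext ?_)
      show (c : ℕ) = (b : ℕ) - 1
      omega
    · intro habs; exact absurd (Finset.mem_univ _) habs
  · apply Finset.sum_eq_zero
    intro c _
    simp only [jordanN]
    rw [if_neg, mul_zero]
    intro hcc; omega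

lemma lowM_mul_apply (X : Matrix (Fin m) (Fin m) ℂ) (a b : Fin m) :
    (lowM m * X) a b =
      if 1 ≤ (a : ℕ) then
        (((a : ℕ) : ℂ) * ((m : ℂ) - ((a : ℕ) : ℂ))) *
          X ⟨(a : ℕ) - 1, lt_of_le_of_lt (Nat.sub_le _ _) a.isLt⟩ b
      else 0 := by
  rw [Matrix.mul_apply]
  split_ifs with h
  · rw [Finset.sum_eq_single (⟨(a : ℕ) - 1, lt_of_le_of_lt (Nat.sub_le _ _) a.isLt⟩ : Fin m)]
    · simp only [lowM]
      rw [if_pos (by omega)]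
    · intro c _ hc
      simp only [lowM]
      rw [if_neg, zero_mul]
      intro hcc
      refine hc (Fin.ext ?_)
      show (c : ℕ) = (a : ℕ) - 1
      omega
    · intro habs; exact absurd (Finset.mem_univ _) habs
  · apply Finset.sum_eq_zero
    intro c _
    simp only [lowM]
    rw [if_neg, zero_mul]
    intro hcc; omega

lemma mul_lowM_apply (X : Matrix (Fin m) (Fin m) ℂ) (a b : Fin m) :
    (X * lowM m) a b =
      if h : (b : ℕ) + 1 < m then
        X a ⟨(b : ℕ) + 1, h⟩ * ((((b : ℕ) : ℂ) + 1) * ((m : ℂ) - (((b : ℕ) : ℂ) + 1)))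
      else 0 := by
  rw [Matrix.mul_apply]
  split_ifs with h
  · rw [Finset.sum_eq_single (⟨(b : ℕ) + 1, h⟩ : Fin m)]
    · simp only [lowM]
      rw [if_pos (by simp)]
      push_cast
      ring
    · intro c _ hc
      simp only [lowM]
      rw [if_neg, mul_zero]
      intro hcc
      refine hc (Fin.ext ?_)
      show (c : ℕ) = (b : ℕ) + 1
      omega
    · intro habs; exact absurd (Finset.mem_univ _) habs
  · apply Finset.sum_eq_zero
    intro c _
    simp only [lowM]
    rw [if_neg, mul_zero]
    intro hcc
    exact h (by omega)

lemma hMat_mul_apply (X : Matrix (Fin m) (Fin m) ℂ) (a b : Fin m) :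
    (hMat m * X) a b = ((m : ℂ) - 1 - 2 * ((a : ℕ) : ℂ)) * X a b := by
  rw [Matrix.mul_apply]
  rw [Finset.sum_eq_single a]
  · simp [hMat]
  · intro c _ hc
    simp only [hMat]
    rw [if_neg (fun hh => hc hh.symm), zero_mul]
  · intro habs; exact absurd (Finset.mem_univ _) habs

lemma mul_hMat_apply (X : Matrix (Fin m) (Fin m) ℂ) (a b : Fin m) :
    (X * hMat m) a b = X a b * ((m : ℂ) - 1 - 2 * ((b : ℕ) : ℂ)) := by
  rw [Matrix.mul_apply]
  rw [Finset.sum_eq_single b]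
  · simp [hMat]
  · intro c _ hc
    simp only [hMat]
    rw [if_neg hc, mul_zero]
  · intro habs; exact absurd (Finset.mem_univ _) habs

lemma lowM_apply_pos (a b : Fin m) (h : (a : ℕ) = (b : ℕ) + 1) :
    lowM m a b = ((a : ℕ) : ℂ) * ((m : ℂ) - ((a : ℕ) : ℂ)) := if_pos h

lemma lowM_apply_neg (a b : Fin m) (h : ¬ (a : ℕ) = (b : ℕ) + 1) :
    lowM m a b = 0 := if_neg h

lemma commEF : jordanN m * lowM m - lowM m * jordanN m = hMat m := by
  funext a b
  rw [Matrix.sub_apply, jordanN_mul_apply, mul_jordanN_apply]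
  by_cases hab : (a : ℕ) = (b : ℕ)
  · have hab' : a = b := Fin.ext hab
    subst hab'
    have hA : hMat m a a = (m:ℂ) - 1 - 2*((a:ℕ):ℂ) := if_pos rfl
    rw [hA]
    by_cases h1 : (a : ℕ) + 1 < m
    · rw [dif_pos h1, lowM_apply_pos _ _ rfl]
      by_cases h2 : 1 ≤ (a : ℕ)
      · rw [if_pos h2, lowM_apply_pos _ _ (by show (a:ℕ) = (a:ℕ) - 1 + 1; omega)]
        simp only [Fin.val_mk]
        push_cast
        ring
      · rw [if_neg h2]
        have ha0 : (a : ℕ) = 0 := by omega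
        simp only [Fin.val_mk, ha0]
        push_cast
        ring
    · rw [dif_neg h1]
      have ham : (a : ℕ) + 1 = m := by have := a.isLt; omega
      have hC : (m : ℂ) = ((a : ℕ) : ℂ) + 1 := by exact_mod_cast congrArg (Nat.cast : ℕ → ℂ) ham.symm
      by_cases h2 : 1 ≤ (a : ℕ)
      · rw [if_pos h2, lowM_apply_pos _ _ (by show (a:ℕ) = (a:ℕ) - 1 + 1; omega), hC]
        ring
      · rw [if_neg h2]
        have ha0 : (a : ℕ) = 0 := by omega
        rw [ha0] at hC ⊢
        rw [hC]
        push_cast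
        ring
  · have hne : a ≠ b := fun h => hab (congrArg Fin.val h)
    simp only [hMat, if_neg hne]
    have t1 : (if h : (a : ℕ) + 1 < m then lowM m ⟨(a : ℕ) + 1, h⟩ b else 0) = 0 := by
      split_ifs with h
      · exact lowM_apply_neg _ _ (by show ¬ (a:ℕ) + 1 = (b:ℕ) + 1; omega)
      · rfl
    have t2 : (if 1 ≤ (b : ℕ) then
        lowM m a ⟨(b : ℕ) - 1, lt_of_le_of_lt (Nat.sub_le _ _) b.isLt⟩ else 0) = 0 := by
      split_ifs with h
      · exact lowM_apply_neg _ _ (by show ¬ (a:ℕ) = (b:ℕ) - 1 + 1; omega)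
      · rfl
    rw [t1, t2, sub_zero]


noncomputable def Eop (m : ℕ) : Module.End ℂ (Matrix (Fin m) (Fin m) ℂ) :=
  sylvOp (jordanN m) (jordanN m)
noncomputable def Fop (m : ℕ) : Module.End ℂ (Matrix (Fin m) (Fin m) ℂ) :=
  sylvOp (lowM m) (lowM m)
noncomputable def Hop (m : ℕ) : Module.End ℂ (Matrix (Fin m) (Fin m) ℂ) :=
  sylvOp (hMat m) (hMat m)

def OnDiag (d : ℤ) (X : Matrix (Fin m) (Fin m) ℂ) : Prop :=
  ∀ a b : Fin m, X a b ≠ 0 → ((a : ℕ) : ℤ) - ((b : ℕ) : ℤ) = d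

lemma onDiag_jordanN : OnDiag (-1) (jordanN m) := by
  intro a b h
  rcases eq_or_ne ((b : ℕ)) ((a : ℕ) + 1) with hc | hc
  · omega
  · simp [jordanN, hc] at h

lemma onDiag_lowM : OnDiag 1 (lowM m) := by
  intro a b h
  rcases eq_or_ne ((a : ℕ)) ((b : ℕ) + 1) with hc | hc
  · omega
  · simp [lowM, hc] at h

lemma onDiag_one : OnDiag 0 (1 : Matrix (Fin m) (Fin m) ℂ) := by
  intro a b h
  rcases eq_or_ne a b with hc | hc
  · subst hc; omega
  · exact absurd (Matrix.one_apply_ne hc) h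

lemma onDiag_mul {d₁ d₂ : ℤ} {X Y : Matrix (Fin m) (Fin m) ℂ}
    (hX : OnDiag d₁ X) (hY : OnDiag d₂ Y) : OnDiag (d₁ + d₂) (X * Y) := by
  intro a b h
  rw [Matrix.mul_apply] at h
  obtain ⟨c, -, hc⟩ := Finset.exists_ne_zero_of_sum_ne_zero h
  have h1 := hX a c (left_ne_zero_of_mul hc)
  have h2 := hY c b (right_ne_zero_of_mul hc)
  omega

lemma onDiag_sub {d : ℤ} {X Y : Matrix (Fin m) (Fin m) ℂ}
    (hX : OnDiag d X) (hY : OnDiag d Y) : OnDiag d (X - Y) := by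
  intro a b h
  rw [Matrix.sub_apply] at h
  rcases eq_or_ne (X a b) 0 with h1 | h1
  · exact hY a b (by intro h2; rw [h1, h2, sub_zero] at h; exact h rfl)
  · exact hX a b h1

lemma onDiag_npow (j : ℕ) : OnDiag (-(j : ℤ)) ((jordanN m) ^ j) := by
  induction j with
  | zero => simpa using (onDiag_one (m := m))
  | succ j ih =>
    have := onDiag_mul ih (onDiag_jordanN (m := m))
    rw [← pow_succ] at this
    convert this using 1
    push_cast; ring

lemma onDiag_F {d : ℤ} {X : Matrix (Fin m) (Fin m) ℂ} (hX : OnDiag d X) :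
    OnDiag (d + 1) (Fop m X) := by
  have h1 := onDiag_mul (onDiag_lowM (m := m)) hX
  have h2 := onDiag_mul hX (onDiag_lowM (m := m))
  rw [add_comm] at h1
  exact onDiag_sub h1 h2

lemma onDiag_Fpow (r j : ℕ) :
    OnDiag ((r : ℤ) - (j : ℤ)) ((Fop m ^ r) ((jordanN m) ^ j)) := by
  induction r with
  | zero =>
    simpa using onDiag_npow (m := m) j
  | succ r ih =>
    have := onDiag_F ih
    rw [← Module.End.mul_apply, ← pow_succ'] at this
    convert this using 1
    push_cast; ring

lemma Hact {d : ℤ} {X : Matrix (Fin m) (Fin m) ℂ} (hX : OnDiag d X) :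
    Hop m X = (-2 * (d : ℂ)) • X := by
  funext a b
  show (hMat m * X - X * hMat m) a b = _
  rw [Matrix.sub_apply, hMat_mul_apply, mul_hMat_apply, Matrix.smul_apply, smul_eq_mul]
  rcases eq_or_ne (X a b) 0 with h | h
  · rw [h]; ring
  · have hd := hX a b h
    have : ((a : ℕ) : ℂ) - ((b : ℕ) : ℂ) = (d : ℂ) := by
      have : (((a : ℕ) : ℤ) : ℂ) - (((b : ℕ) : ℤ) : ℂ) = ((d : ℤ) : ℂ) := by
        rw [← Int.cast_sub, hd]
      push_cast at this ⊢
      exact this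
    rw [← this]
    ring

lemma opId : Eop m * Fop m - Fop m * Eop m = Hop m := by
  apply LinearMap.ext
  intro X
  show Eop m (Fop m X) - Fop m (Eop m X) = Hop m X
  show (jordanN m) * (lowM m * X - X * lowM m) - (lowM m * X - X * lowM m) * jordanN m
      - ((lowM m) * (jordanN m * X - X * jordanN m) - (jordanN m * X - X * jordanN m) * lowM m)
      = hMat m * X - X * hMat m
  rw [← commEF]
  noncomm_ring


lemma E_ann (j : ℕ) : Eop m ((jordanN m)^j) = 0 := by
  show jordanN m * (jordanN m)^j - (jordanN m)^j * jordanN m = 0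
  rw [((Commute.refl (jordanN m)).pow_right j).eq, sub_self]

lemma EF_elem (X : Matrix (Fin m) (Fin m) ℂ) :
    Eop m (Fop m X) = Fop m (Eop m X) + Hop m X := by
  have h2 : Eop m * Fop m = Fop m * Eop m + Hop m := by
    rw [← opId]; abel
  have h3 := congrFun (congrArg (fun f : Module.End ℂ _ => ⇑f) h2) X
  simpa [Module.End.mul_apply] using h3

lemma keyrel (j r : ℕ) :
    Eop m ((Fop m ^ (r+1)) ((jordanN m)^j)) =
      (((r:ℂ)+1) * (2*(j:ℂ) - (r:ℂ))) • (Fop m ^ r) ((jordanN m)^j) := by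
  induction r with
  | zero =>
    rw [pow_one, pow_zero, Module.End.one_apply]
    rw [EF_elem, E_ann, map_zero, zero_add, Hact (onDiag_npow j)]
    congr 1
    push_cast
    ring
  | succ r ih =>
    have h1 : (Fop m ^ (r+1+1)) ((jordanN m)^j) = Fop m ((Fop m ^ (r+1)) ((jordanN m)^j)) := by
      rw [← Module.End.mul_apply, ← pow_succ']
    rw [h1, EF_elem, ih, map_smul, Hact (onDiag_Fpow (r+1) j)]
    rw [← Module.End.mul_apply, ← pow_succ', ← add_smul]
    congr 1
    push_cast
    ring

lemma zkey (r j : ℕ) : (Eop m ^ (r+1)) ((Fop m ^ r) ((jordanN m)^j)) = 0 := by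
  induction r with
  | zero => simp [Module.End.one_apply, E_ann]
  | succ r ih =>
    rw [pow_succ, Module.End.mul_apply, keyrel, map_smul, ih, smul_zero]

lemma Epow_zero (k r j : ℕ) (h : r < k) :
    (Eop m ^ k) ((Fop m ^ r) ((jordanN m)^j)) = 0 := by
  have hd : k = (k - (r+1)) + (r+1) := by omega
  rw [hd, pow_add, Module.End.mul_apply, zkey, map_zero]

lemma Epow (k r j : ℕ) (hkr : k ≤ r) (hrj : r ≤ 2*j) :
    ∃ c : ℂ, c ≠ 0 ∧ (Eop m ^ k) ((Fop m ^ r) ((jordanN m)^j)) =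
      c • (Fop m ^ (r - k)) ((jordanN m)^j) := by
  induction k generalizing r with
  | zero => exact ⟨1, one_ne_zero, by simp⟩
  | succ k ih =>
    obtain ⟨r', rfl⟩ : ∃ r', r = r'+1 := ⟨r-1, by omega⟩
    obtain ⟨c, hc, heq⟩ := ih r' (by omega) (by omega)
    have h2j : r' < 2*j := by omega
    have h2 : (2*(j:ℂ) - (r':ℂ)) ≠ 0 := by
      have hcast : ((2*j - r' : ℕ) : ℂ) = 2*(j:ℂ) - (r':ℂ) := by
        push_cast [Nat.cast_sub h2j.le]
        ring
      rw [← hcast]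
      exact Nat.cast_ne_zero.mpr (by omega)
    refine ⟨(((r':ℂ)+1) * (2*(j:ℂ) - (r':ℂ))) * c,
      mul_ne_zero (mul_ne_zero (Nat.cast_add_one_ne_zero r') h2) hc, ?_⟩
    have hexp : r' + 1 - (k + 1) = r' - k := by omega
    rw [pow_succ, Module.End.mul_apply, keyrel, map_smul, heq, smul_smul, hexp]

lemma jordanN_pow_apply (j : ℕ) (a b : Fin m) :
    ((jordanN m)^j) a b = if (b:ℕ) = (a:ℕ) + j then 1 else 0 := by
  induction j generalizing a with
  | zero =>
    rw [pow_zero, Matrix.one_apply]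
    apply if_congr _ rfl rfl
    rw [Fin.ext_iff]
    omega
  | succ j ih =>
    rw [pow_succ', jordanN_mul_apply]
    by_cases h : (a:ℕ)+1 < m
    · rw [dif_pos h, ih]
      apply if_congr _ rfl rfl
      simp only [Fin.val_mk]
      omega
    · rw [dif_neg h,
        if_neg (show ¬((b:ℕ) = (a:ℕ)+(j+1)) by have hb := b.isLt; have ha := a.isLt; omega)]

lemma indep_Npow : LinearIndependent ℂ (fun j : Fin m => (jordanN m)^(j:ℕ)) := by
  rw [Fintype.linearIndependent_iff]
  intro g hg j
  have h0 : (0:ℕ) < m := j.pos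
  have h := congrFun (congrFun hg ⟨0, h0⟩) j
  rw [Matrix.sum_apply] at h
  have h2 : ∀ i : Fin m, (g i • (jordanN m)^(i:ℕ)) ⟨0,h0⟩ j =
      if i = j then g i else 0 := by
    intro i
    rw [Matrix.smul_apply, jordanN_pow_apply, smul_eq_mul]
    split_ifs with h1 h2 h3
    · rw [mul_one]
    · exfalso; apply h2; apply Fin.ext; simp only [Fin.val_mk] at h1; omega
    · exfalso; apply h1; subst h3; simp
    · rw [mul_zero]
  rw [Finset.sum_congr rfl (fun i _ => h2 i), Finset.sum_ite_eq' Finset.univ j g] at h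
  simpa using h

noncomputable def Vfam (m : ℕ) : (Σ j : Fin m, Fin (2*(j:ℕ)+1)) → Matrix (Fin m) (Fin m) ℂ :=
  fun i => (Fop m ^ (i.2 : ℕ)) ((jordanN m) ^ (i.1 : ℕ))

lemma indep_aux (n : ℕ) :
    ∀ g : (Σ j : Fin m, Fin (2*(j:ℕ)+1)) → ℂ,
      (∀ i, g i ≠ 0 → (i.2 : ℕ) < n) →
      ∑ i, g i • Vfam m i = 0 → ∀ i, g i = 0 := by
  induction n with
  | zero =>
    intro g hsupp hsum i
    by_contra hgi
    exact Nat.not_lt_zero _ (hsupp i hgi)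
  | succ n ih =>
    intro g hsupp hsum
    have h1 : ∑ i, g i • (Eop m ^ n) (Vfam m i) = 0 := by
      have h := congrArg (⇑(Eop m ^ n)) hsum
      simpa [map_sum, map_smul] using h
    have hch : ∀ j : Fin m, n ≤ 2*(j:ℕ) → ∃ c : ℂ, c ≠ 0 ∧
        (Eop m ^ n) ((Fop m ^ n) ((jordanN m)^(j:ℕ))) =
          c • (Fop m ^ (n - n)) ((jordanN m)^(j:ℕ)) :=
      fun j hj => Epow n n (j:ℕ) le_rfl hj
    choose c hc0 hceq using hch
    rw [← Finset.univ_sigma_univ, Finset.sum_sigma] at h1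
    have h2 : ∀ j : Fin m, (∑ r : Fin (2*(j:ℕ)+1), g ⟨j, r⟩ • (Eop m ^ n) (Vfam m ⟨j, r⟩)) =
        (if hn : n ≤ 2*(j:ℕ) then g ⟨j, ⟨n, by omega⟩⟩ * c j hn else 0) • (jordanN m)^(j:ℕ) := by
      intro j
      split_ifs with hn
      · rw [Finset.sum_eq_single (⟨n, by omega⟩ : Fin (2*(j:ℕ)+1))]
        · show g ⟨j,⟨n, _⟩⟩ • (Eop m ^ n) ((Fop m ^ n) ((jordanN m)^(j:ℕ))) = _
          rw [hceq j hn, smul_smul, Nat.sub_self, pow_zero, Module.End.one_apply]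
        · intro r _ hr
          rcases lt_or_ge (r:ℕ) n with hlt | hge
          · show g ⟨j, r⟩ • (Eop m ^ n) ((Fop m ^ (r:ℕ)) ((jordanN m)^(j:ℕ))) = 0
            rw [Epow_zero n (r:ℕ) (j:ℕ) hlt, smul_zero]
          · have hne : (r:ℕ) ≠ n := fun hh => hr (Fin.ext hh)
            have hgz : g ⟨j, r⟩ = 0 := by
              by_contra hgz
              have := hsupp ⟨j,r⟩ hgz
              simp only at this
              omega
            rw [hgz, zero_smul]
        · intro habs; exact absurd (Finset.mem_univ _) habs
      · rw [zero_smul]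
        apply Finset.sum_eq_zero
        intro r _
        show g ⟨j, r⟩ • (Eop m ^ n) ((Fop m ^ (r:ℕ)) ((jordanN m)^(j:ℕ))) = 0
        rw [Epow_zero n (r:ℕ) (j:ℕ) (by have := r.isLt; omega), smul_zero]
    have h3 : ∑ j : Fin m,
        (if hn : n ≤ 2*(j:ℕ) then g ⟨j, ⟨n, by omega⟩⟩ * c j hn else 0) • (jordanN m)^(j:ℕ)
          = 0 :=
      (Finset.sum_congr rfl fun j _ => (h2 j).symm).trans h1
    have h4 := Fintype.linearIndependent_iff.mp indep_Npow _ h3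
    have h5 : ∀ (j : Fin m) (hn : n ≤ 2*(j:ℕ)), g ⟨j, ⟨n, by omega⟩⟩ = 0 := by
      intro j hn
      have hj := h4 j
      rw [dif_pos hn] at hj
      exact (mul_eq_zero.mp hj).resolve_right (hc0 j hn)
    apply ih g
    · intro i hgi
      have hlt := hsupp i hgi
      rcases lt_or_eq_of_le (Nat.lt_succ_iff.mp hlt) with hcase | hcase
      · exact hcase
      · exfalso
        obtain ⟨j, r⟩ := i
        simp only at hcase
        have hn : n ≤ 2*(j:ℕ) := by have := r.isLt; omega
        have hr : r = ⟨n, by omega⟩ := Fin.ext hcase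
        rw [hr] at hgi
        exact hgi (h5 j hn)
    · exact hsum

lemma indepV : LinearIndependent ℂ (Vfam m) := by
  rw [Fintype.linearIndependent_iff]
  intro g hg
  exact indep_aux (2*m) g (fun i _ => by have := i.1.isLt; have := i.2.isLt; omega) hg


lemma sum_odd (m : ℕ) : ∑ j ∈ Finset.range m, (2*j+1) = m*m := by
  induction m with
  | zero => simp
  | succ m ih =>
    rw [Finset.sum_range_succ, ih]
    ring

lemma sum_sub (m k : ℕ) : ∑ j ∈ Finset.range m, (2*j+1-k) = (2*m-k)^2/4 := by
  induction m with
  | zero => simp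
  | succ m ih =>
    rw [Finset.sum_range_succ, ih]
    rcases le_or_gt k (2*m) with h | h
    · have e1 : 2*(m+1) - k = (2*m-k) + 2 := by omega
      rw [e1]
      have h1 : ((2*m-k)+2)^2 = (2*m-k)^2 + 4*(2*m-k) + 4 := by ring
      generalize hw : ((2*m-k)+2)^2 = w at h1 ⊢
      generalize hu : (2*m-k)^2 = u at h1 ⊢
      omega
    · rcases le_or_gt k (2*m+1) with h2 | h2
      · have e1 : k = 2*m+1 := by omega
        have e2 : 2*m - k = 0 := by omega
        have e3 : 2*m+1-k = 0 := by omega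
        have e4 : 2*(m+1)-k = 1 := by omega
        rw [e2, e3, e4]
        norm_num
      · have e2 : 2*m - k = 0 := by omega
        have e3 : 2*m+1-k = 0 := by omega
        have e4 : 2*(m+1)-k = 0 := by omega
        rw [e2, e3, e4]
        norm_num

lemma minsum_eq (m k : ℕ) :
    ∑ j ∈ Finset.range m, min k (2*j+1) = m*m - (2*m-k)^2/4 := by
  have h1 := sum_sub m k
  have h2 : ∑ j ∈ Finset.range m, (min k (2*j+1) + (2*j+1-k)) = m*m := by
    rw [Finset.sum_congr rfl (fun j _ => (by omega : min k (2*j+1) + (2*j+1-k) = 2*j+1))]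
    exact sum_odd m
  rw [Finset.sum_add_distrib, h1] at h2
  have h3 : (2*m-k)^2/4 ≤ (2*m-k)^2 := Nat.div_le_self _ _
  generalize hu : (2*m-k)^2 = u at h2 h3 ⊢
  generalize hP : m*m = P at h2 ⊢
  omega

lemma finrank_ker_eq (m k : ℕ) :
    Module.finrank ℂ (LinearMap.ker ((Eop m) ^ k)) =
      ∑ j ∈ Finset.range m, min k (2*j+1) := by
  classical
  -- kernel lower bound
  let ιK := Σ j : Fin m, Fin (min k (2*(j:ℕ)+1))
  let embK : ιK → (Σ j : Fin m, Fin (2*(j:ℕ)+1)) :=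
    fun i => ⟨i.1, ⟨(i.2:ℕ), by have := i.2.isLt; omega⟩⟩
  have hinjK : Function.Injective embK := by
    rintro ⟨j, r⟩ ⟨j', r'⟩ h
    obtain ⟨h1, h2⟩ := Sigma.mk.inj_iff.mp h
    subst h1
    simp only [heq_eq_eq] at h2
    have h3 := congrArg Fin.val h2
    simp only [Fin.val_mk] at h3
    exact congrArg (Sigma.mk j) (Fin.ext h3)
  have hmemK : ∀ i : ιK, Vfam m (embK i) ∈ LinearMap.ker (Eop m ^ k) := by
    intro i
    rw [LinearMap.mem_ker]
    exact Epow_zero k (i.2:ℕ) (i.1:ℕ) (by have := i.2.isLt; omega)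
  have hK : ∑ j ∈ Finset.range m, min k (2*j+1) ≤
      Module.finrank ℂ (LinearMap.ker (Eop m ^ k)) := by
    have hind : LinearIndependent ℂ (Vfam m ∘ embK) := indepV.comp embK hinjK
    let W : ιK → LinearMap.ker (Eop m ^ k) := fun i => ⟨Vfam m (embK i), hmemK i⟩
    have hindW : LinearIndependent ℂ W :=
      LinearIndependent.of_comp (LinearMap.ker (Eop m ^ k)).subtype hind
    have hcard := hindW.fintype_card_le_finrank
    have hc2 : Fintype.card ιK = ∑ j ∈ Finset.range m, min k (2*j+1) := by
      rw [Fintype.card_sigma]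
      simp only [Fintype.card_fin]
      exact Fin.sum_univ_eq_sum_range (fun j => min k (2*j+1)) m
    omega
  -- range lower bound
  let ιR := Σ j : Fin m, Fin (2*(j:ℕ)+1-k)
  have hEx : ∀ i : ιR, ∃ c : ℂ, c ≠ 0 ∧
      (Eop m ^ k) ((Fop m ^ ((i.2:ℕ)+k)) ((jordanN m)^((i.1:ℕ)))) =
        c • (Fop m ^ (((i.2:ℕ)+k)-k)) ((jordanN m)^((i.1:ℕ))) :=
    fun i => Epow k _ _ (by omega) (by have := i.2.isLt; omega)
  choose c hc0 hceq using hEx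
  let embR : ιR → (Σ j : Fin m, Fin (2*(j:ℕ)+1)) :=
    fun i => ⟨i.1, ⟨(i.2:ℕ), by have := i.2.isLt; omega⟩⟩
  have hinjR : Function.Injective embR := by
    rintro ⟨j, r⟩ ⟨j', r'⟩ h
    obtain ⟨h1, h2⟩ := Sigma.mk.inj_iff.mp h
    subst h1
    simp only [heq_eq_eq] at h2
    have h3 := congrArg Fin.val h2
    simp only [Fin.val_mk] at h3
    exact congrArg (Sigma.mk j) (Fin.ext h3)
  have hR : ∑ j ∈ Finset.range m, (2*j+1-k) ≤
      Module.finrank ℂ (LinearMap.range (Eop m ^ k)) := by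
    have hindBase : LinearIndependent ℂ (Vfam m ∘ embR) := indepV.comp embR hinjR
    let w : ιR → ℂˣ := fun i => Units.mk0 (c i) (hc0 i)
    have hindU : LinearIndependent ℂ (w • (Vfam m ∘ embR)) := hindBase.units_smul w
    have hUeq : ∀ i : ιR, (w • (Vfam m ∘ embR)) i =
        (Eop m ^ k) ((Fop m ^ ((i.2:ℕ)+k)) ((jordanN m)^((i.1:ℕ)))) := by
      intro i
      have h1 := hceq i
      rw [Nat.add_sub_cancel] at h1
      rw [h1]
      rfl
    have hmemR : ∀ i : ιR, (w • (Vfam m ∘ embR)) i ∈ LinearMap.range (Eop m ^ k) := by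
      intro i
      rw [hUeq i]
      exact LinearMap.mem_range_self _ _
    let U : ιR → LinearMap.range (Eop m ^ k) := fun i => ⟨(w • (Vfam m ∘ embR)) i, hmemR i⟩
    have hindU2 : LinearIndependent ℂ U :=
      LinearIndependent.of_comp (LinearMap.range (Eop m ^ k)).subtype hindU
    have hcard := hindU2.fintype_card_le_finrank
    have hc2 : Fintype.card ιR = ∑ j ∈ Finset.range m, (2*j+1-k) := by
      rw [Fintype.card_sigma]
      simp only [Fintype.card_fin]
      exact Fin.sum_univ_eq_sum_range (fun j => 2*j+1-k) m
    omega
  have hrn := LinearMap.finrank_range_add_finrank_ker (Eop m ^ k)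
  have htot : Module.finrank ℂ (Matrix (Fin m) (Fin m) ℂ) = m*m := by
    rw [Module.finrank_matrix]
    simp
  rw [htot] at hrn
  have hsum : (∑ j ∈ Finset.range m, min k (2*j+1)) + (∑ j ∈ Finset.range m, (2*j+1-k))
      = m*m := by
    rw [← Finset.sum_add_distrib,
      Finset.sum_congr rfl (fun j _ => (by omega : min k (2*j+1) + (2*j+1-k) = 2*j+1))]
    exact sum_odd m
  omega

lemma sq_mod_four (t k : ℕ) (h : t % 2 = k % 2) : t^2 % 4 = k^2 % 4 := by
  obtain ⟨a, ha⟩ : ∃ a, t = 2*a ∨ t = 2*a+1 := ⟨t/2, by omega⟩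
  obtain ⟨b, hb⟩ : ∃ b, k = 2*b ∨ k = 2*b+1 := ⟨k/2, by omega⟩
  rcases ha with ha | ha <;> rcases hb with hb | hb <;> subst ha hb
  · have e1 : (2*a)^2 = 4*(a^2) := by ring
    have e2 : (2*b)^2 = 4*(b^2) := by ring
    rw [e1, e2]
    omega
  · exfalso; omega
  · exfalso; omega
  · have e1 : (2*a+1)^2 = 4*(a^2+a)+1 := by ring
    have e2 : (2*b+1)^2 = 4*(b^2+b)+1 := by ring
    rw [e1, e2]
    omega

lemma arith1 (m k : ℕ) (hk : k ≤ m) : m*m - (2*m-k)^2/4 = k*m - k^2/4 := by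
  obtain ⟨t, ht⟩ : ∃ t, 2*m = t + k := ⟨2*m - k, by omega⟩
  have e1 : 2*m - k = t := by omega
  rw [e1, Nat.mul_comm k m]
  have h0 : t^2 + 2*(t*k) + k^2 = 4*(m*m) := by
    have h' : (t+k)^2 = (2*m)^2 := by rw [ht]
    calc t^2 + 2*(t*k) + k^2 = (t+k)^2 := by ring
    _ = (2*m)^2 := h'
    _ = 4*(m*m) := by ring
  have h2 : t*k + k^2 = 2*(m*k) := by
    have h' : (t+k)*k = (2*m)*k := by rw [ht]
    calc t*k + k^2 = (t+k)*k := by ring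
    _ = (2*m)*k := h'
    _ = 2*(m*k) := by ring
  have hmod2 : t^2 % 4 = k^2 % 4 := sq_mod_four t k (by omega)
  have hPQ : m*k ≤ m*m := Nat.mul_le_mul_left m hk
  have hvQ : k^2 ≤ m*k := by
    have : k*k ≤ m*k := Nat.mul_le_mul_right k hk
    calc k^2 = k*k := by ring
    _ ≤ m*k := this
  generalize hu : t^2 = u at h0 hmod2 ⊢
  generalize hv : k^2 = v at h0 h2 hmod2 hvQ ⊢
  generalize hW : t*k = W at h0 h2
  generalize hP : m*m = P at h0 hPQ ⊢
  generalize hQ : m*k = Q at h2 hPQ hvQ ⊢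
  omega

end Stmt17Aux

theorem stmt17 (m : ℕ) : ∀ k : ℕ,
    (k ≤ m →
      Module.finrank ℂ (LinearMap.ker ((sylvOp (jordanN m) (jordanN m)) ^ k)) =
        k * m - k ^ 2 / 4) ∧
    (m ≤ k → k ≤ 2 * m - 1 →
      Module.finrank ℂ (LinearMap.ker ((sylvOp (jordanN m) (jordanN m)) ^ k)) =
        m ^ 2 - (2 * m - k) ^ 2 / 4) ∧
    (2 * m - 1 ≤ k →
      Module.finrank ℂ (LinearMap.ker ((sylvOp (jordanN m) (jordanN m)) ^ k)) = m ^ 2) := by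
  intro k
  have hE : sylvOp (jordanN m) (jordanN m) = Stmt17Aux.Eop m := rfl
  have hmain : Module.finrank ℂ (LinearMap.ker ((sylvOp (jordanN m) (jordanN m)) ^ k)) =
      m*m - (2*m-k)^2/4 := by
    rw [hE, Stmt17Aux.finrank_ker_eq, Stmt17Aux.minsum_eq]
  refine ⟨?_, ?_, ?_⟩
  · intro hk
    rw [hmain, Stmt17Aux.arith1 m k hk]
  · intro _ _
    rw [hmain, pow_two m]
  · intro hk
    rw [hmain]
    have h01 : 2*m - k = 0 ∨ 2*m - k = 1 := by omega
    rcases h01 with h | h <;> rw [h] <;> norm_num [pow_two]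
end
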